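/- arXiv:1706.05889 — 2 statements merged into one kernel-verified Lean document; each statement's English description precedes it below -/
import Mathlib

section
/- Let N, M ≥ 1 and let 𝒬 ⊆ ℝ^{N×M} be a nonempty compact convex set, each element of which is row-stochastic with strictly positive entries. Then the robust channel capacity is bounded above as follows: sup_{p ∈ Δ_N} inf_{Q ∈ 𝒬} I(p,Q) ≤ inf_{Q ∈ 𝒬} [ log N + max_{1 ≤ n ≤ N} Σ_{m=1}^M Q_{nm} log( Q_{nm} / Σ_{l=1}^N Q_{lm} ) ]. -/
open Real

/-- Average mutual information `I(p,Q)`. -/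
noncomputable def AMI {N M : ℕ} (p : Fin N → ℝ) (Q : Fin N → Fin M → ℝ) : ℝ :=
  ∑ n, ∑ m, p n * Q n m * Real.log (Q n m / ∑ l, p l * Q l m)

/-- `Q` is row-stochastic with strictly positive entries. -/
def rowStochPos {N M : ℕ} (Q : Fin N → Fin M → ℝ) : Prop :=
  (∀ n m, 0 < Q n m) ∧ ∀ n, ∑ m, Q n m = 1

/-- Robust channel capacity `sup_{p ∈ Δ_N} inf_{Q ∈ 𝒬} I(p,Q)`. -/
noncomputable def robustCap {N M : ℕ} (𝒬 : Set (Fin N → Fin M → ℝ)) : ℝ :=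
  sSup { x | ∃ p ∈ stdSimplex ℝ (Fin N), x = sInf { y | ∃ Q ∈ 𝒬, y = AMI p Q } }

/-! Both bounds on `I(p,Q)` are instances of the concavity of `log`: writing `s = pQ` for the
output distribution, `I(p,Q) = ∑ₙ pₙ D(Qₙ ‖ s) ≥ 0`, and splitting `log (Q/s)` as
`log (Q/t) + log (t/s)` with `t` the column sums of `Q` gives
`I(p,Q) = ∑ₙ pₙ ∑ₘ Qₙₘ log (Qₙₘ/tₘ) + ∑ₘ sₘ log (tₘ/sₘ)`, where the first sum is at most the
largest row term and, by Jensen, the second is at most `log ∑ₘ tₘ = log N`. -/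

theorem Real.sum_mul_log_div_le_log_sum {ι : Type*} [Fintype ι] {w x : ι → ℝ}
    (hw : ∀ i, 0 < w i) (hx : ∀ i, 0 < x i) (hw1 : ∑ i, w i = 1) :
    ∑ i, w i * log (x i / w i) ≤ log (∑ i, x i) := by
  have jensen := strictConcaveOn_log_Ioi.concaveOn.le_map_sum (t := Finset.univ)
    (fun i _ => (hw i).le) hw1 (fun i _ => Set.mem_Ioi.mpr (div_pos (hx i) (hw i)))
  simpa only [smul_eq_mul, mul_div_cancel₀ _ (hw _).ne'] using jensen

section Channel

variable {N M : ℕ}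

noncomputable def outputDist (p : Fin N → ℝ) (Q : Fin N → Fin M → ℝ) (m : Fin M) : ℝ :=
  ∑ l, p l * Q l m

theorem AMI_eq_sum_mul_sum (p : Fin N → ℝ) (Q : Fin N → Fin M → ℝ) :
    AMI p Q = ∑ n, p n * ∑ m, Q n m * log (Q n m / outputDist p Q m) := by
  simp only [AMI, outputDist, Finset.mul_sum, mul_assoc]

variable {p : Fin N → ℝ} {Q : Fin N → Fin M → ℝ}

theorem outputDist_pos (hp : p ∈ stdSimplex ℝ (Fin N)) (hQ : rowStochPos Q) (m : Fin M) :
    0 < outputDist p Q m := by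
  obtain ⟨l, hl⟩ : ∃ l, p l ≠ 0 := by
    by_contra! h
    simpa [h] using hp.2
  exact Finset.sum_pos' (fun i _ => mul_nonneg (hp.1 i) (hQ.1 i m).le)
    ⟨l, Finset.mem_univ l, mul_pos ((hp.1 l).lt_of_ne' hl) (hQ.1 l m)⟩

theorem sum_outputDist (hp : p ∈ stdSimplex ℝ (Fin N)) (hQ : rowStochPos Q) :
    ∑ m, outputDist p Q m = 1 := by
  simp only [outputDist]
  rw [Finset.sum_comm]
  simp only [← Finset.mul_sum, hQ.2, mul_one, hp.2]

theorem AMI_nonneg (hp : p ∈ stdSimplex ℝ (Fin N)) (hQ : rowStochPos Q) : 0 ≤ AMI p Q := by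
  rw [AMI_eq_sum_mul_sum]
  refine Finset.sum_nonneg fun n _ => mul_nonneg (hp.1 n) ?_
  have gibbs := Real.sum_mul_log_div_le_log_sum (hQ.1 n) (outputDist_pos hp hQ) (hQ.2 n)
  rw [sum_outputDist hp hQ, log_one] at gibbs
  have hrev : ∀ m, log (Q n m / outputDist p Q m) = -log (outputDist p Q m / Q n m) :=
    fun m => by rw [← log_inv, inv_div]
  simpa only [hrev, mul_neg, Finset.sum_neg_distrib, neg_nonneg] using gibbs

theorem AMI_le_log_add_sup' (hN : (Finset.univ : Finset (Fin N)).Nonempty)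
    (hp : p ∈ stdSimplex ℝ (Fin N)) (hQ : rowStochPos Q) :
    AMI p Q ≤ log N + Finset.univ.sup' hN (fun n => ∑ m, Q n m * log (Q n m / ∑ l, Q l m)) := by
  set s := outputDist p Q with hs_def
  set t : Fin M → ℝ := fun m => ∑ l, Q l m
  set c := Finset.univ.sup' hN (fun n => ∑ m, Q n m * log (Q n m / t m))
  have hs : ∀ m, 0 < s m := outputDist_pos hp hQ
  have ht : ∀ m, 0 < t m := fun m => Finset.sum_pos (fun l _ => hQ.1 l m) hN
  have hsum_t : ∑ m, t m = N := by
    simp only [t]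
    rw [Finset.sum_comm]
    simp [hQ.2]
  have hsplit : AMI p Q =
      ∑ n, p n * ∑ m, Q n m * log (Q n m / t m) + ∑ m, s m * log (t m / s m) := by
    have hlog : ∀ n m, log (Q n m / s m) = log (Q n m / t m) + log (t m / s m) := fun n m => by
      rw [log_div (hQ.1 n m).ne' (hs m).ne', log_div (hQ.1 n m).ne' (ht m).ne',
        log_div (ht m).ne' (hs m).ne']
      ring
    have hcross : ∑ m, s m * log (t m / s m) =
        ∑ n, p n * ∑ m, Q n m * log (t m / s m) := by
      simp only [s, outputDist, Finset.sum_mul, Finset.mul_sum, mul_assoc]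
      exact Finset.sum_comm
    rw [AMI_eq_sum_mul_sum, ← hs_def, hcross, ← Finset.sum_add_distrib]
    refine Finset.sum_congr rfl fun n _ => ?_
    simp only [hlog, mul_add, Finset.sum_add_distrib]
  have hrows : ∑ n, p n * ∑ m, Q n m * log (Q n m / t m) ≤ c :=
    calc ∑ n, p n * ∑ m, Q n m * log (Q n m / t m) ≤ ∑ n, p n * c :=
          Finset.sum_le_sum fun n _ =>
            mul_le_mul_of_nonneg_left
              (Finset.le_sup' (fun n => ∑ m, Q n m * log (Q n m / t m)) (Finset.mem_univ n))
              (hp.1 n)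
      _ = c := by rw [← Finset.sum_mul, hp.2, one_mul]
  have hjensen : ∑ m, s m * log (t m / s m) ≤ log N := by
    simpa only [hsum_t] using
      Real.sum_mul_log_div_le_log_sum hs ht (sum_outputDist hp hQ)
  linarith

end Channel

theorem robust_capacity_upper_bound_general
    {N M : ℕ} (hN : 0 < N)
    (𝒬 : Set (Fin N → Fin M → ℝ))
    (hne : 𝒬.Nonempty)
    (hQ : ∀ Q ∈ 𝒬, rowStochPos Q) :
    robustCap 𝒬 ≤
      sInf { x | ∃ Q ∈ 𝒬,
        x = Real.log N +
          Finset.univ.sup' (Finset.univ_nonempty_iff.mpr (Fin.pos_iff_nonempty.mp hN))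
            (fun n => ∑ m, Q n m * Real.log (Q n m / ∑ l, Q l m)) } := by
  obtain ⟨Q₁, hQ₁⟩ := hne
  refine le_csInf ⟨_, Q₁, hQ₁, rfl⟩ ?_
  rintro _ ⟨Q₀, hQ₀, rfl⟩
  refine csSup_le ⟨_, _, single_mem_stdSimplex ℝ (⟨0, hN⟩ : Fin N), rfl⟩ ?_
  rintro _ ⟨p, hp, rfl⟩
  -- `sInf` of a set that is not bounded below is `0`, so `csInf_le` needs `I(p,Q) ≥ 0`.
  have hbdd : BddBelow { y | ∃ Q ∈ 𝒬, y = AMI p Q } :=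
    ⟨0, by rintro _ ⟨Q, hQm, rfl⟩; exact AMI_nonneg hp (hQ Q hQm)⟩
  exact (csInf_le hbdd ⟨Q₀, hQ₀, rfl⟩).trans (AMI_le_log_add_sup' _ hp (hQ Q₀ hQ₀))

theorem robust_capacity_upper_bound
    {N M : ℕ} (hN : 0 < N) (hM : 0 < M)
    (𝒬 : Set (Fin N → Fin M → ℝ))
    (hne : 𝒬.Nonempty) (hcomp : IsCompact 𝒬) (hconv : Convex ℝ 𝒬)
    (hQ : ∀ Q ∈ 𝒬, rowStochPos Q) :
    robustCap 𝒬 ≤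
      sInf { x | ∃ Q ∈ 𝒬,
        x = Real.log N +
          Finset.univ.sup' (Finset.univ_nonempty_iff.mpr (Fin.pos_iff_nonempty.mp hN))
            (fun n => ∑ m, Q n m * Real.log (Q n m / ∑ l, Q l m)) } :=
  robust_capacity_upper_bound_general hN 𝒬 hne hQ
end

section
/- Let N, M ≥ 1, S ≥ 1, let Q⁰, Q¹, …, Q^S ∈ ℝ^{N×M}, and let B ⊆ ℝ^S be a nonempty compact convex set. Define Q(ξ) = Q⁰ + Σ_{s=1}^S ξ_s Q^s, and assume that for every ξ ∈ B the matrix Q(ξ) is row-stochastic with strictly positive entries. Let φ(ξ,p) = I(p, Q(ξ)). Then the minimax equality holds: sup_{p ∈ Δ_N} inf_{ξ ∈ B} φ(ξ,p) = inf_{ξ ∈ B} sup_{p ∈ Δ_N} φ(ξ,p). -/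
open Real

/-!
`I(p, Q)` is concave in the input distribution `p`, being the entropy of the output
distribution `pQ` minus the `p`-average of the row entropies, and convex in the channel `Q`,
each summand `Q log (Q / pQ)` being the perspective of the convex function `x log x`.
As `ξ ↦ Q(ξ)` is affine, `φ` is continuous and convex in `ξ` on the compact convex set `B`
and continuous and concave in `p` on the simplex, so Sion's minimax theorem provides a
saddle point; its value is both the sup-inf and the inf-sup.
-/

theorem perspective_weights {x₁ x₂ t₁ t₂ a b : ℝ} (ht₁ : 0 < t₁) (ht₂ : 0 < t₂) (ha : 0 ≤ a)
    (hb : 0 ≤ b) (hab : a + b = 1) :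
    0 < a * t₁ + b * t₂ ∧ 0 ≤ a * t₁ / (a * t₁ + b * t₂) ∧ 0 ≤ b * t₂ / (a * t₁ + b * t₂) ∧
      a * t₁ / (a * t₁ + b * t₂) + b * t₂ / (a * t₁ + b * t₂) = 1 ∧
      (a * x₁ + b * x₂) / (a * t₁ + b * t₂) =
        a * t₁ / (a * t₁ + b * t₂) * (x₁ / t₁) + b * t₂ / (a * t₁ + b * t₂) * (x₂ / t₂) := by
  have ht : 0 < a * t₁ + b * t₂ := convex_Ioi (0 : ℝ) ht₁ ht₂ ha hb hab
  exact ⟨ht, by positivity, by positivity, by field_simp, by field_simp⟩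

theorem ConvexOn.perspective {s : Set ℝ} {f : ℝ → ℝ} (hf : ConvexOn ℝ s f) :
    ConvexOn ℝ {z : ℝ × ℝ | 0 < z.2 ∧ z.1 / z.2 ∈ s} fun z => z.2 * f (z.1 / z.2) := by
  refine ⟨?_, ?_⟩
  · rintro ⟨x₁, t₁⟩ ⟨ht₁ : 0 < t₁, hs₁⟩ ⟨x₂, t₂⟩ ⟨ht₂ : 0 < t₂, hs₂⟩ a b ha hb hab
    obtain ⟨ht, hw₁, hw₂, hw, hx⟩ := perspective_weights (x₁ := x₁) (x₂ := x₂) ht₁ ht₂ ha hb hab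
    simp only [Set.mem_ofPred_eq, Prod.fst_add, Prod.snd_add, Prod.smul_fst, Prod.smul_snd,
      smul_eq_mul, hx]
    exact ⟨ht, hf.1 hs₁ hs₂ hw₁ hw₂ hw⟩
  · rintro ⟨x₁, t₁⟩ ⟨ht₁ : 0 < t₁, hs₁⟩ ⟨x₂, t₂⟩ ⟨ht₂ : 0 < t₂, hs₂⟩ a b ha hb hab
    obtain ⟨ht, hw₁, hw₂, hw, hx⟩ := perspective_weights (x₁ := x₁) (x₂ := x₂) ht₁ ht₂ ha hb hab
    simp only [Prod.fst_add, Prod.snd_add, Prod.smul_fst, Prod.smul_snd, smul_eq_mul, hx]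
    calc (a * t₁ + b * t₂) * f (a * t₁ / (a * t₁ + b * t₂) * (x₁ / t₁) +
          b * t₂ / (a * t₁ + b * t₂) * (x₂ / t₂))
        ≤ (a * t₁ + b * t₂) * (a * t₁ / (a * t₁ + b * t₂) * f (x₁ / t₁) +
          b * t₂ / (a * t₁ + b * t₂) * f (x₂ / t₂)) :=
          mul_le_mul_of_nonneg_left (hf.2 hs₁ hs₂ hw₁ hw₂ hw) ht.le
      _ = a * (t₁ * f (x₁ / t₁)) + b * (t₂ * f (x₂ / t₂)) := by field_simp

theorem convexOn_mul_log_div :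
    ConvexOn ℝ (Set.Ioi 0 ×ˢ Set.Ioi 0) fun z : ℝ × ℝ => z.1 * log (z.1 / z.2) := by
  refine (convexOn_mul_log.perspective.subset ?_ ((convex_Ioi 0).prod (convex_Ioi 0))).congr ?_
  · rintro ⟨x, t⟩ ⟨hx, ht⟩
    exact ⟨ht, Set.mem_Ici.2 (div_pos hx ht).le⟩
  · rintro ⟨x, t⟩ ⟨-, ht : 0 < t⟩
    field_simp

theorem AMI_eq_sum_negMulLog_sub {N M : ℕ} {p : Fin N → ℝ} {Q : Fin N → Fin M → ℝ}
    (hQ : ∀ n m, Q n m ≠ 0) (hr : ∀ m, ∑ l, p l * Q l m ≠ 0) :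
    AMI p Q = ∑ m, negMulLog (∑ l, p l * Q l m) - ∑ n, p n * ∑ m, negMulLog (Q n m) := by
  have hout : ∑ n, ∑ m, p n * Q n m * log (∑ l, p l * Q l m) =
      ∑ m, (∑ l, p l * Q l m) * log (∑ l, p l * Q l m) := by
    rw [Finset.sum_comm]
    simp only [Finset.sum_mul]
  simp only [AMI, log_div (hQ _ _) (hr _), mul_sub, Finset.sum_sub_distrib]
  rw [hout]
  simp only [negMulLog, Finset.mul_sum, neg_mul, Finset.sum_neg_distrib, mul_neg, sub_neg_eq_add,
    mul_assoc]
  ring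

theorem sum_mul_pos_of_mem_stdSimplex {ι : Type*} [Fintype ι] {p v : ι → ℝ}
    (hp : p ∈ stdSimplex ℝ ι) (hv : ∀ i, 0 < v i) : 0 < ∑ i, p i * v i := by
  obtain ⟨i, -, hi⟩ : ∃ i ∈ Finset.univ, (0 : ι → ℝ) i < p i :=
    Finset.exists_lt_of_sum_lt (by simp [hp.2])
  exact Finset.sum_pos' (fun j _ => mul_nonneg (hp.1 j) (hv j).le)
    ⟨i, Finset.mem_univ i, mul_pos hi (hv i)⟩

theorem continuousOn_AMI {N M : ℕ} :
    ContinuousOn (fun z : (Fin N → ℝ) × (Fin N → Fin M → ℝ) => AMI z.1 z.2)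
      (stdSimplex ℝ (Fin N) ×ˢ {Q | ∀ n m, 0 < Q n m}) := by
  exact Continuous.continuousOn (by fun_prop) |>.congr fun z ⟨hp, hQ⟩ =>
    AMI_eq_sum_negMulLog_sub (fun n m => (hQ n m).ne')
      fun m => (sum_mul_pos_of_mem_stdSimplex hp fun l => hQ l m).ne'

theorem concaveOn_AMI {N M : ℕ} {Q : Fin N → Fin M → ℝ} (hQ : ∀ n m, 0 < Q n m) :
    ConcaveOn ℝ (stdSimplex ℝ (Fin N)) fun p => AMI p Q := by
  refine ConcaveOn.congr ⟨convex_stdSimplex ℝ _, fun p₁ hp₁ p₂ hp₂ a b ha hb hab => ?_⟩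
    fun p hp => (AMI_eq_sum_negMulLog_sub (fun n m => (hQ n m).ne')
      fun m => (sum_mul_pos_of_mem_stdSimplex hp fun l => hQ l m).ne').symm
  have hentropy := Finset.sum_le_sum fun m (_ : m ∈ Finset.univ) => concaveOn_negMulLog.2
    (sum_mul_pos_of_mem_stdSimplex hp₁ fun l => hQ l m).le
    (sum_mul_pos_of_mem_stdSimplex hp₂ fun l => hQ l m).le ha hb hab
  simp only [smul_eq_mul, Finset.sum_add_distrib, ← Finset.mul_sum] at hentropy
  simp only [Pi.add_apply, Pi.smul_apply, smul_eq_mul, add_mul, Finset.sum_add_distrib,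
    mul_assoc, ← Finset.mul_sum]
  linarith

theorem convexOn_AMI {N M : ℕ} {p : Fin N → ℝ} (hp : p ∈ stdSimplex ℝ (Fin N)) :
    ConvexOn ℝ {Q : Fin N → Fin M → ℝ | ∀ n m, 0 < Q n m} fun Q => AMI p Q := by
  refine ⟨fun Q₁ h₁ Q₂ h₂ a b ha hb hab n m => convex_Ioi (0 : ℝ) (h₁ n m) (h₂ n m) ha hb hab,
    fun Q₁ h₁ Q₂ h₂ a b ha hb hab => ?_⟩
  have hout : ∀ m, ∑ l, p l * (a • Q₁ + b • Q₂) l m =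
      a * ∑ l, p l * Q₁ l m + b * ∑ l, p l * Q₂ l m := fun m => by
    simp only [Pi.add_apply, Pi.smul_apply, smul_eq_mul, mul_add, Finset.sum_add_distrib,
      Finset.mul_sum, mul_left_comm (p _)]
  have hterm : ∀ n m, (a * Q₁ n m + b * Q₂ n m) *
        log ((a * Q₁ n m + b * Q₂ n m) / (a * ∑ l, p l * Q₁ l m + b * ∑ l, p l * Q₂ l m)) ≤
      a * (Q₁ n m * log (Q₁ n m / ∑ l, p l * Q₁ l m)) +
        b * (Q₂ n m * log (Q₂ n m / ∑ l, p l * Q₂ l m)) := fun n m =>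
    convexOn_mul_log_div.2 (x := (Q₁ n m, ∑ l, p l * Q₁ l m)) (y := (Q₂ n m, ∑ l, p l * Q₂ l m))
      ⟨h₁ n m, sum_mul_pos_of_mem_stdSimplex hp fun l => h₁ l m⟩
      ⟨h₂ n m, sum_mul_pos_of_mem_stdSimplex hp fun l => h₂ l m⟩ ha hb hab
  calc AMI p (a • Q₁ + b • Q₂)
      = ∑ n, p n * ∑ m, (a * Q₁ n m + b * Q₂ n m) *
          log ((a * Q₁ n m + b * Q₂ n m) / (a * ∑ l, p l * Q₁ l m + b * ∑ l, p l * Q₂ l m)) := by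
        simp only [AMI, hout]
        simp only [Finset.mul_sum, Pi.add_apply, Pi.smul_apply, smul_eq_mul, mul_assoc]
    _ ≤ ∑ n, p n * ∑ m, (a * (Q₁ n m * log (Q₁ n m / ∑ l, p l * Q₁ l m)) +
          b * (Q₂ n m * log (Q₂ n m / ∑ l, p l * Q₂ l m))) := by
        gcongr with n _ m _
        · exact hp.1 n
        · exact hterm n m
    _ = a • AMI p Q₁ + b • AMI p Q₂ := by
        simp only [AMI, smul_eq_mul, Finset.mul_sum, mul_add, Finset.sum_add_distrib]
        congr 1 <;> exact Finset.sum_congr rfl fun _ _ => Finset.sum_congr rfl fun _ _ => by ring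

theorem IsSaddlePointOn.sSup_sInf_eq_sInf_sSup {E F : Type*} {X : Set E} {Y : Set F}
    {f : E → F → ℝ} {a : E} {b : F} (ha : a ∈ X) (hb : b ∈ Y) (hab : IsSaddlePointOn X Y f a b)
    (hX : ∀ y ∈ Y, BddBelow ((f · y) '' X)) (hY : ∀ x ∈ X, BddAbove (f x '' Y)) :
    sSup {v | ∃ y ∈ Y, v = sInf {w | ∃ x ∈ X, w = f x y}} =
      sInf {v | ∃ x ∈ X, v = sSup {w | ∃ y ∈ Y, w = f x y}} := by
  have hinf : ∀ y ∈ Y, sInf {w | ∃ x ∈ X, w = f x y} ≤ f a y := fun y hy =>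
    csInf_le ((hX y hy).mono (by rintro _ ⟨x, hx, rfl⟩; exact ⟨x, hx, rfl⟩)) ⟨a, ha, rfl⟩
  have hsup : ∀ x ∈ X, f x b ≤ sSup {w | ∃ y ∈ Y, w = f x y} := fun x hx =>
    le_csSup ((hY x hx).mono (by rintro _ ⟨y, hy, rfl⟩; exact ⟨y, hy, rfl⟩)) ⟨b, hb, rfl⟩
  have hinf_b : sInf {w | ∃ x ∈ X, w = f x b} = f a b :=
    IsLeast.csInf_eq ⟨⟨a, ha, rfl⟩, by rintro _ ⟨x, hx, rfl⟩; exact hab x hx b hb⟩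
  have hsup_a : sSup {w | ∃ y ∈ Y, w = f a y} = f a b :=
    IsGreatest.csSup_eq ⟨⟨b, hb, rfl⟩, by rintro _ ⟨y, hy, rfl⟩; exact hab a ha y hy⟩
  have hlhs : IsGreatest {v | ∃ y ∈ Y, v = sInf {w | ∃ x ∈ X, w = f x y}} (f a b) := by
    refine ⟨⟨b, hb, hinf_b.symm⟩, ?_⟩
    rintro _ ⟨y, hy, rfl⟩
    exact (hinf y hy).trans (hab a ha y hy)
  have hrhs : IsLeast {v | ∃ x ∈ X, v = sSup {w | ∃ y ∈ Y, w = f x y}} (f a b) := by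
    refine ⟨⟨a, ha, hsup_a.symm⟩, ?_⟩
    rintro _ ⟨x, hx, rfl⟩
    exact (hab x hx b hb).trans (hsup x hx)
  rw [hlhs.csSup_eq, hrhs.csInf_eq]

theorem minimax_equality_perturbed_channel_general
    {N M S : ℕ} (hN : 0 < N)
    (Q0 : Fin N → Fin M → ℝ) (Qs : Fin S → Fin N → Fin M → ℝ)
    (B : Set (Fin S → ℝ)) (hBne : B.Nonempty) (hBcomp : IsCompact B)
    (hBconv : Convex ℝ B)
    (Qmap : (Fin S → ℝ) → (Fin N → Fin M → ℝ))
    (hQmap : Qmap = fun ξ => fun n m => Q0 n m + ∑ s, ξ s * Qs s n m)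
    (hpos : ∀ ξ ∈ B, rowStochPos (Qmap ξ))
    (φ : (Fin S → ℝ) → (Fin N → ℝ) → ℝ)
    (hφ : φ = fun ξ p => AMI p (Qmap ξ)) :
    sSup { x | ∃ p ∈ stdSimplex ℝ (Fin N), x = sInf { y | ∃ ξ ∈ B, y = φ ξ p } } =
      sInf { y | ∃ ξ ∈ B, y = sSup { x | ∃ p ∈ stdSimplex ℝ (Fin N), x = φ ξ p } } := by
  obtain ⟨g, rfl⟩ : ∃ g : (Fin S → ℝ) →ᵃ[ℝ] (Fin N → Fin M → ℝ), ⇑g = Qmap :=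
    ⟨(Fintype.linearCombination ℝ Qs).toAffineMap + AffineMap.const ℝ (Fin S → ℝ) Q0, by
      subst hQmap
      ext ξ n m
      simp [Fintype.linearCombination_apply, Finset.sum_apply, add_comm]⟩
  subst hφ
  have hgpos : ∀ ξ ∈ B, ∀ n m, 0 < g ξ n m := fun ξ hξ => (hpos ξ hξ).1
  -- `(e :)` elaborates the composition on its own: unifying `?f ∘ ?g` with the goal first
  -- exhausts the heartbeat budget.
  have hcontB : ∀ p ∈ stdSimplex ℝ (Fin N), ContinuousOn (fun ξ => AMI p (g ξ)) B :=
    fun p hp => (continuousOn_AMI.comp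
      (continuous_const.prodMk g.continuous_of_finiteDimensional).continuousOn
      fun ξ hξ => ⟨hp, hgpos ξ hξ⟩ :)
  have hcontΔ : ∀ ξ ∈ B, ContinuousOn (fun p => AMI p (g ξ)) (stdSimplex ℝ (Fin N)) :=
    fun ξ hξ => (continuousOn_AMI.comp (continuous_id.prodMk continuous_const).continuousOn
      fun p hp => ⟨hp, hgpos ξ hξ⟩ :)
  obtain ⟨a, ha, b, hb, hab⟩ := Sion.exists_isSaddlePointOn hBne hBconv hBcomp
    (fun p hp => (hcontB p hp).lowerSemicontinuousOn)
    (fun p hp => (((convexOn_AMI hp).comp_affineMap g).subset hgpos hBconv).quasiconvexOn)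
    (convex_stdSimplex ℝ _) ⟨_, single_mem_stdSimplex ℝ (⟨0, hN⟩ : Fin N)⟩
    (isCompact_stdSimplex ℝ (Fin N))
    (fun ξ hξ => (hcontΔ ξ hξ).upperSemicontinuousOn)
    (fun ξ hξ => (concaveOn_AMI (hgpos ξ hξ)).quasiconcaveOn)
  exact hab.sSup_sInf_eq_sInf_sSup ha hb (fun p hp => hBcomp.bddBelow_image (hcontB p hp))
    fun ξ hξ => (isCompact_stdSimplex ℝ (Fin N)).bddAbove_image (hcontΔ ξ hξ)

theorem minimax_equality_perturbed_channel
    {N M S : ℕ} (hN : 0 < N) (hM : 0 < M) (hS : 0 < S)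
    (Q0 : Fin N → Fin M → ℝ) (Qs : Fin S → Fin N → Fin M → ℝ)
    (B : Set (Fin S → ℝ)) (hBne : B.Nonempty) (hBcomp : IsCompact B)
    (hBconv : Convex ℝ B)
    (Qmap : (Fin S → ℝ) → (Fin N → Fin M → ℝ))
    (hQmap : Qmap = fun ξ => fun n m => Q0 n m + ∑ s, ξ s * Qs s n m)
    (hpos : ∀ ξ ∈ B, rowStochPos (Qmap ξ))
    (φ : (Fin S → ℝ) → (Fin N → ℝ) → ℝ)
    (hφ : φ = fun ξ p => AMI p (Qmap ξ)) :
    sSup { x | ∃ p ∈ stdSimplex ℝ (Fin N), x = sInf { y | ∃ ξ ∈ B, y = φ ξ p } } =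
      sInf { y | ∃ ξ ∈ B, y = sSup { x | ∃ p ∈ stdSimplex ℝ (Fin N), x = φ ξ p } } :=
  minimax_equality_perturbed_channel_general hN Q0 Qs B hBne hBcomp hBconv Qmap hQmap hpos φ hφ
end
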